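/- For every nonzero homogeneous Laurent polynomial p ∈ 𝕃_n^hom, the quotient p/reg(p) is an n-regular Laurent polynomial, i.e. p/reg(p) ∈ 𝕃_n^reg. -/

import Mathlib

open scoped BigOperators

noncomputable section

/-- The coefficient ring `R = ℤ[R₁,…,Rₙ]`. -/
abbrev Rring (n : ℕ) : Type := MvPolynomial (Fin n) ℤ

/-- The ring `𝕃ₙ` of Laurent polynomials in `x₁,y₁,…,xₙ,yₙ` over `R`,
encoded as the monoid algebra of `ℤⁿ × ℤⁿ` (the exponents `(k,l)`). -/
abbrev Lring (n : ℕ) : Type :=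
  AddMonoidAlgebra (Rring n) ((Fin n → ℤ) × (Fin n → ℤ))

namespace Panazzolo

/-- `Δⱼ = R₁⋯Rⱼ` (here `j` is 1-indexed: `Dl n j = ∏_{i<j} X i`). -/
def Dl (n j : ℕ) : Rring n :=
  ∏ i ∈ Finset.univ.filter (fun i : Fin n => (i : ℕ) < j), MvPolynomial.X i

/-- Exponent of `P_{j-1} = x₁⋯x_{j-1}/(y₁⋯y_{j-1})` (with `j` 0-indexed). -/
def Pexp (n : ℕ) (j : Fin n) : (Fin n → ℤ) × (Fin n → ℤ) :=
  (fun i => if i < j then 1 else 0, fun i => if i < j then -1 else 0)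

/-- The derivation `∂` on `𝕃ₙ`, determined by
`∂xⱼ = ∂yⱼ = Δⱼ xⱼ (x₁⋯x_{j-1})/(y₁⋯y_{j-1})`. -/
def der (n : ℕ) (p : Lring n) : Lring n :=
  p.coeff.sum fun kl c => ∑ j : Fin n,
    (AddMonoidAlgebra.single (kl + Pexp n j) ((kl.1 j) • (Dl n ((j : ℕ) + 1) * c)) +
     AddMonoidAlgebra.single (kl + Pexp n j + (Pi.single j 1, Pi.single j (-1)))
       ((kl.2 j) • (Dl n ((j : ℕ) + 1) * c)))

/-- The coefficient `q` of `xᵢ^α yᵢ^β` in `p`, viewed as a polynomial in `(xᵢ,yᵢ)`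
(the variables `xᵢ,yᵢ` are erased from the result). -/
def coeffAt (n : ℕ) (i : Fin n) (α β : ℤ) (p : Lring n) : Lring n :=
  ∑ kl ∈ p.coeff.support.filter (fun kl => kl.1 i = α ∧ kl.2 i = β),
    AddMonoidAlgebra.single (Function.update kl.1 i 0, Function.update kl.2 i 0) (p.coeff kl)

/-- `k`-regularity of a Laurent polynomial (the paper's `𝕃ₖ^reg`), defined inductively:
`0`-regular means a nonzero element of the coefficient ring `R`; `p` is `(k+1)`-regular if it
is homogeneous, involves only the variables `x₁,y₁,…,x_{k+1},y_{k+1}`, is a genuine polynomial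
in `(x_{k+1},y_{k+1})` of degree `m`, and the coefficient `q₀` of `x_{k+1}^0 y_{k+1}^m`
is `k`-regular. -/
def IsReg (n : ℕ) : ℕ → Lring n → Prop
  | 0, p => p ≠ 0 ∧ ∀ kl ∈ p.coeff.support, kl = 0
  | (k+1), p =>
      (∀ kl ∈ p.coeff.support, ∀ i : Fin n, k + 1 ≤ (i : ℕ) → kl.1 i = 0 ∧ kl.2 i = 0) ∧
      (∃ d : Fin n → ℤ, ∀ kl ∈ p.coeff.support, kl.1 + kl.2 = d) ∧
      (∃ m : ℕ, (∀ kl ∈ p.coeff.support, ∀ i : Fin n, (i : ℕ) = k →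
          0 ≤ kl.1 i ∧ 0 ≤ kl.2 i ∧ kl.1 i + kl.2 i = (m : ℤ)) ∧
        ∀ i : Fin n, (i : ℕ) = k → IsReg n k (coeffAt n i 0 (m : ℤ) p))

-- The exponent of the regularization monomial `reg(p)` (computed through the first `k`
-- variable pairs, from the top one down).
open Classical in
def regExp (n : ℕ) : ℕ → Lring n → (Fin n → ℤ) × (Fin n → ℤ)
  | 0, _ => 0
  | (k+1), p =>
      if h : k < n ∧ p ≠ 0 then
        have hs : p.coeff.support.Nonempty := Finsupp.support_nonempty_iff.mpr
          (fun h0 => h.2 (AddMonoidAlgebra.coeffEquiv.injective (h0.trans rfl)))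
        let i : Fin n := ⟨k, h.1⟩
        let n0 : ℤ := (p.coeff.support.image fun kl => kl.1 i).min' (hs.image _)
        let l0 : ℤ := (p.coeff.support.image fun kl => kl.2 i).min' (hs.image _)
        let n1 : ℤ := (p.coeff.support.image fun kl => kl.2 i).max' (hs.image _)
        (Pi.single i n0, Pi.single i l0) + regExp n k (coeffAt n i n0 n1 p)
      else 0

/-- Division by the regularization monomial: `q ↦ q/reg(q)`. -/
def divreg (n : ℕ) (q : Lring n) : Lring n :=
  AddMonoidAlgebra.single (-(regExp n n q)) 1 * q

/-- The derivation-division sequence `p⁽⁰⁾ = p`, `p⁽ᵏ⁺¹⁾ = ∂p⁽ᵏ⁾ / reg(∂p⁽ᵏ⁾)`. -/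
def seqDD (n : ℕ) (p : Lring n) : ℕ → Lring n
  | 0 => p
  | (k+1) => divreg n (der n (seqDD n p k))

/-- `p` belongs to the coefficient ring `R ⊆ 𝕃ₙ`. -/
def InR (n : ℕ) (p : Lring n) : Prop := ∀ kl ∈ p.coeff.support, kl = 0

/-- The reverse lexicographic (strict) order on `ℕⁿ`. -/
def rlexLt (n : ℕ) (d d' : Fin n → ℕ) : Prop :=
  ∃ i : Fin n, (∀ j : Fin n, i < j → d j = d' j) ∧ d i < d' i

/-- The monomial `yⱼ^e` (with `j` 1-indexed). -/
def ymon (n : ℕ) (j e : ℕ) : Lring n :=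
  AddMonoidAlgebra.single (0, fun i : Fin n => if (i : ℕ) + 1 = j then (e : ℤ) else 0) 1

/-- The nested expression `Q_j + (⋯(Q₂ + (Q₁ + α y₁^{m₁}) y₂^{m₂})⋯) y_j^{m_j}`. -/
def nestedP (n : ℕ) (α : Rring n) (Q : ℕ → Lring n) (m : ℕ → ℕ) : ℕ → Lring n
  | 0 => AddMonoidAlgebra.single 0 α
  | (j+1) => Q (j+1) + nestedP n α Q m j * ymon n (j+1) (m (j+1))

/-- Auxiliary recursion for the function `H_k` of Section 6. -/
def Haux {k : ℕ} (f : (Fin (k+1) → ℕ) → ℕ) : (Fin (k+1) → ℕ) → ℕ → ℕ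
  | μ, 0 => f μ
  | μ, (t+1) => Haux f (Function.update μ (Fin.last k) (μ (Fin.last k) + f μ)) t

/-- The functions `H_k : ℕᵏ → ℕ` of Section 6. -/
def Hfun : (k : ℕ) → (Fin k → ℕ) → ℕ
  | 0, _ => 0
  | 1, m => m 0
  | (k+2), m => Haux (Hfun (k+1)) (Fin.init m) (m (Fin.last (k+1)))

/-- The regular Laurent polynomial
`p = Δₙ ∑_{j=1}^n (Δⱼ−Δ_{j−1}) (∏_{i=1}^{j−1} xᵢ)(∏_{i=j}^{n−1} yᵢ)`
associated with equation (1) (it lives in the variables `x₁,…,x_{n−1},y₁,…,y_{n−1}`). -/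
def pSpec (n : ℕ) : Lring n :=
  ∑ j ∈ Finset.Icc 1 n,
    AddMonoidAlgebra.single
      ((fun i : Fin n => if (i : ℕ) + 1 ≤ j - 1 then 1 else 0),
       (fun i : Fin n => if j ≤ (i : ℕ) + 1 ∧ (i : ℕ) + 1 ≤ n - 1 then (1 : ℤ) else 0))
      (Dl n n * (Dl n j - Dl n (j - 1)))

/-- `DD(n)`: the number of steps of the derivation-division algorithm applied to `pSpec n`. -/
def DDnum (n : ℕ) : ℕ := sInf {m : ℕ | InR n (seqDD n (pSpec n) m)}

/-- The functions `gᵢ` : `g₀(x) = x`, `g_{i+1}(x) = a_{i+1} + gᵢ(x)^{r_{i+1}}` (real powers),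
with 1-indexed parameter families `a r : ℕ → ℝ`. -/
def gfun (a r : ℕ → ℝ) : ℕ → ℝ → ℝ
  | 0 => fun x => x
  | (i+1) => fun x => a (i+1) + gfun a r i x ^ r (i+1)

/-- The functions `fᵢ` : `f_{i+1}(x) = gᵢ(x)^{r_{i+1}}`. -/
def ffun (a r : ℕ → ℝ) : ℕ → ℝ → ℝ
  | 0 => fun _ => 1
  | (i+1) => fun x => gfun a r i x ^ r (i+1)

/-- The domain `I(a,r)`: the set of `x` where `g₀(x),…,gₙ(x)` are all strictly positive. -/
def Iset (n : ℕ) (a r : ℕ → ℝ) : Set ℝ := {x : ℝ | ∀ i ≤ n, 0 < gfun a r i x}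

/-- The solution set `Sₙ(b,a,r) = {x ∈ I(a,r) : gₙ(x) = b x}`. -/
def Sset (n : ℕ) (b : ℝ) (a r : ℕ → ℝ) : Set ℝ :=
  {x ∈ Iset n a r | gfun a r n x = b * x}

/-- The evaluation morphism `Ψ : 𝕃ₙ → C^ω(I(a,r))`, `Rᵢ ↦ rᵢ`, `xᵢ ↦ fᵢ`, `yᵢ ↦ gᵢ`
(defined pointwise). -/
def Psi (n : ℕ) (a r : ℕ → ℝ) (p : Lring n) : ℝ → ℝ := fun x =>
  p.coeff.sum fun kl c =>
    (MvPolynomial.aeval (fun i : Fin n => r ((i : ℕ) + 1)) c : ℝ) *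
      ∏ i : Fin n, (ffun a r ((i : ℕ) + 1) x ^ kl.1 i * gfun a r ((i : ℕ) + 1) x ^ kl.2 i)

/-- `δⱼ = r₁⋯rⱼ` (with `δ₀ = 1`). -/
def delta (r : ℕ → ℝ) (j : ℕ) : ℝ := ∏ i ∈ Finset.Icc 1 j, r i

/-- Extension of a `Fin n`-indexed parameter vector to a 1-indexed family `ℕ → ℝ`. -/
def extF (n : ℕ) (v : Fin n → ℝ) : ℕ → ℝ :=
  fun i => if h : 1 ≤ i ∧ i ≤ n then v ⟨i - 1, by omega⟩ else 0

end Panazzolo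

namespace Panazzolo

variable {n : ℕ}

abbrev G (n : ℕ) := (Fin n → ℤ) × (Fin n → ℤ)

lemma shift_apply (s : G n) (p : Lring n) (y : G n) :
    (AddMonoidAlgebra.single s (1 : Rring n) * p).coeff y = p.coeff (y - s) := by
  rw [AddMonoidAlgebra.coeff_single_mul_apply, one_mul, neg_add_eq_sub]

lemma mem_shift_support {s : G n} {p : Lring n} {y : G n} :
    y ∈ (AddMonoidAlgebra.single s (1 : Rring n) * p).coeff.support ↔ y - s ∈ p.coeff.support := by
  simp [Finsupp.mem_support_iff, shift_apply, neg_add_eq_sub]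

lemma shift_ne_zero {s : G n} {p : Lring n} (hp : p ≠ 0) :
    AddMonoidAlgebra.single s (1 : Rring n) * p ≠ 0 := by
  obtain ⟨y, hy⟩ := Finsupp.support_nonempty_iff.mpr (mt AddMonoidAlgebra.coeff_eq_zero.mp hp)
  intro h
  have : y + s ∈ (AddMonoidAlgebra.single s (1 : Rring n) * p).coeff.support := by
    rw [mem_shift_support]; simpa using hy
  rw [h] at this; simp at this

lemma coeffAt_apply (i : Fin n) (α β : ℤ) (p : Lring n) (w : G n) :
    (coeffAt n i α β p).coeff w =
      if w.1 i = 0 ∧ w.2 i = 0 then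
        p.coeff (Function.update w.1 i α, Function.update w.2 i β) else 0 := by
  classical
  rw [coeffAt, AddMonoidAlgebra.coeff_sum, Finsupp.finset_sum_apply]
  by_cases hw : w.1 i = 0 ∧ w.2 i = 0
  · rw [if_pos hw]
    set k₀ : G n := (Function.update w.1 i α, Function.update w.2 i β) with hk₀
    have key : ∀ kl ∈ p.coeff.support.filter (fun kl => kl.1 i = α ∧ kl.2 i = β),
        (AddMonoidAlgebra.single
          (Function.update kl.1 i 0, Function.update kl.2 i 0) (p.coeff kl) : Lring n).coeff w
        = if kl = k₀ then p.coeff kl else 0 := by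
      intro kl hkl
      rw [Finset.mem_filter] at hkl
      rw [AddMonoidAlgebra.coeff_single, Finsupp.single_apply]
      congr 1
      apply propext
      constructor
      · rintro h
        have h1 : Function.update kl.1 i 0 = w.1 := congrArg Prod.fst h
        have h2 : Function.update kl.2 i 0 = w.2 := congrArg Prod.snd h
        have : kl.1 = Function.update w.1 i α := by
          funext j
          by_cases hj : j = i
          · subst hj; simp [hkl.2.1]
          · rw [← h1]; simp [Function.update_of_ne hj]
        have h2' : kl.2 = Function.update w.2 i β := by
          funext j
          by_cases hj : j = i
          · subst hj; simp [hkl.2.2]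
          · rw [← h2]; simp [Function.update_of_ne hj]
        exact Prod.ext this h2'
      · rintro rfl
        apply Prod.ext <;> funext j <;> by_cases hj : j = i
        · subst hj; simp [hw.1]
        · simp [hk₀, Function.update_of_ne hj]
        · subst hj; simp [hw.2]
        · simp [hk₀, Function.update_of_ne hj]
    rw [Finset.sum_congr rfl key, Finset.sum_ite_eq' _ k₀ (fun kl => p.coeff kl)]
    by_cases hk : k₀ ∈ p.coeff.support.filter (fun kl => kl.1 i = α ∧ kl.2 i = β)
    · rw [if_pos hk]
    · rw [if_neg hk]
      by_contra h
      apply hk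
      rw [Finset.mem_filter]
      refine ⟨Finsupp.mem_support_iff.mpr (Ne.symm h), by simp [hk₀], by simp [hk₀]⟩
  · rw [if_neg hw]
    apply Finset.sum_eq_zero
    intro kl hkl
    rw [AddMonoidAlgebra.coeff_single, Finsupp.single_apply, if_neg]
    intro h
    apply hw
    constructor
    · rw [← congrArg Prod.fst h]; simp
    · rw [← congrArg Prod.snd h]; simp

lemma mem_coeffAt_support {i : Fin n} {α β : ℤ} {p : Lring n} {w : G n} :
    w ∈ (coeffAt n i α β p).coeff.support ↔
      w.1 i = 0 ∧ w.2 i = 0 ∧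
        (Function.update w.1 i α, Function.update w.2 i β) ∈ p.coeff.support := by
  rw [Finsupp.mem_support_iff, coeffAt_apply]
  by_cases hw : w.1 i = 0 ∧ w.2 i = 0
  · simp [hw, Finsupp.mem_support_iff]
  · simp only [if_neg hw]
    constructor
    · intro h; exact absurd rfl h
    · intro h; exact absurd ⟨h.1, h.2.1⟩ hw

end Panazzolo

namespace Panazzolo

lemma regExp_eq_zero {n : ℕ} : ∀ (k : ℕ) (p : Lring n) (i : Fin n), k ≤ (i : ℕ) →
    (regExp n k p).1 i = 0 ∧ (regExp n k p).2 i = 0 := by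
  intro k
  induction k with
  | zero => intro p i _; simp [regExp]
  | succ k ih =>
    intro p i hi
    rw [regExp]
    split
    · next h =>
      have hik : (⟨k, h.1⟩ : Fin n) ≠ i := by
        intro he
        have := congrArg Fin.val he
        simp at this
        omega
      constructor
      · have key : ∀ (q : Lring n) (a : ℤ),
            ((Pi.single (⟨k, h.1⟩ : Fin n) a : Fin n → ℤ) + (regExp n k q).1) i = 0 := by
          intro q a
          rw [Pi.add_apply, Pi.single_eq_of_ne' hik, (ih q i (by omega)).1, add_zero]
        exact key _ _
      · have key : ∀ (q : Lring n) (a : ℤ),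
            ((Pi.single (⟨k, h.1⟩ : Fin n) a : Fin n → ℤ) + (regExp n k q).2) i = 0 := by
          intro q a
          rw [Pi.add_apply, Pi.single_eq_of_ne' hik, (ih q i (by omega)).2, add_zero]
        exact key _ _
    · simp

lemma coeffAt_shift {n : ℕ} (i : Fin n) (α β : ℤ) (s : G n) (p : Lring n) :
    coeffAt n i (α + s.1 i) (β + s.2 i) (AddMonoidAlgebra.single s (1 : Rring n) * p) =
      AddMonoidAlgebra.single (Function.update s.1 i 0, Function.update s.2 i 0)
        (1 : Rring n) * coeffAt n i α β p := by
  refine AddMonoidAlgebra.ext (Finsupp.ext fun w => ?_)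
  rw [coeffAt_apply, shift_apply, shift_apply, coeffAt_apply]
  have e1 : (w - (Function.update s.1 i 0, Function.update s.2 i 0)).1 i = w.1 i := by
    show w.1 i - Function.update s.1 i 0 i = w.1 i
    simp
  have e2 : (w - (Function.update s.1 i 0, Function.update s.2 i 0)).2 i = w.2 i := by
    show w.2 i - Function.update s.2 i 0 i = w.2 i
    simp
  rw [e1, e2]
  by_cases hw : w.1 i = 0 ∧ w.2 i = 0
  · rw [if_pos hw, if_pos hw]
    congr 1
    refine Prod.ext ?_ ?_
    · show Function.update w.1 i (α + s.1 i) - s.1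
        = Function.update (w.1 - Function.update s.1 i 0) i α
      funext j
      by_cases hj : j = i
      · subst hj; simp
      · simp [Function.update_of_ne hj]
    · show Function.update w.2 i (β + s.2 i) - s.2
        = Function.update (w.2 - Function.update s.2 i 0) i β
      funext j
      by_cases hj : j = i
      · subst hj; simp
      · simp [Function.update_of_ne hj]
  · rw [if_neg hw, if_neg hw]

end Panazzolo

namespace Panazzolo

lemma main_reg {n : ℕ} : ∀ (k : ℕ), k ≤ n → ∀ (p : Lring n), p ≠ 0 →
    (∀ kl ∈ p.coeff.support, ∀ i : Fin n, k ≤ (i : ℕ) → kl.1 i = 0 ∧ kl.2 i = 0) →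
    (∃ d : Fin n → ℤ, ∀ kl ∈ p.coeff.support, kl.1 + kl.2 = d) →
    IsReg n k (AddMonoidAlgebra.single (-(regExp n k p)) (1 : Rring n) * p) := by
  intro k
  induction k with
  | zero =>
    intro _ p hp hz _
    have h0 : regExp n 0 p = 0 := rfl
    rw [h0, neg_zero]
    have h1 : AddMonoidAlgebra.single (0 : G n) (1 : Rring n) * p = p := by
      rw [← AddMonoidAlgebra.one_def, one_mul]
    rw [h1]
    exact ⟨hp, fun kl hkl => Prod.ext
      (funext fun i => (hz kl hkl i (Nat.zero_le _)).1)
      (funext fun i => (hz kl hkl i (Nat.zero_le _)).2)⟩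
  | succ k ih =>
    intro hk p hp hz hd
    obtain ⟨d, hd⟩ := hd
    have hkn : k < n := hk
    set i : Fin n := ⟨k, hkn⟩ with hidef
    have hival : (i : ℕ) = k := rfl
    have hsupp : p.coeff.support.Nonempty := Finsupp.support_nonempty_iff.mpr (mt AddMonoidAlgebra.coeff_eq_zero.mp hp)
    set n0 : ℤ := (p.coeff.support.image fun kl => kl.1 i).min' (hsupp.image _) with hn0def
    set l0 : ℤ := (p.coeff.support.image fun kl => kl.2 i).min' (hsupp.image _) with hl0def
    set n1 : ℤ := (p.coeff.support.image fun kl => kl.2 i).max' (hsupp.image _) with hn1def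
    set q : Lring n := coeffAt n i n0 n1 p with hqdef
    set e : G n := regExp n k q with hedef
    -- the unfolding of regExp
    have hreg : regExp n (k+1) p = ((Pi.single i n0, Pi.single i l0) : G n) + e := by
      rw [regExp, dif_pos (⟨hkn, hp⟩ : k < n ∧ p ≠ 0)]
    have he : ∀ j : Fin n, k ≤ (j : ℕ) → e.1 j = 0 ∧ e.2 j = 0 :=
      fun j hj => regExp_eq_zero k q j hj
    -- basic min/max facts
    have hn0_le : ∀ kl ∈ p.coeff.support, n0 ≤ kl.1 i := by
      intro kl hkl
      rw [hn0def]
      exact Finset.min'_le _ _ (Finset.mem_image_of_mem _ hkl)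
    have hl0_le : ∀ kl ∈ p.coeff.support, l0 ≤ kl.2 i := by
      intro kl hkl
      rw [hl0def]
      exact Finset.min'_le _ _ (Finset.mem_image_of_mem _ hkl)
    have hle_n1 : ∀ kl ∈ p.coeff.support, kl.2 i ≤ n1 := by
      intro kl hkl
      rw [hn1def]
      exact Finset.le_max' _ (kl.2 i) (Finset.mem_image_of_mem (fun kl => kl.2 i) hkl)
    have hdi : ∀ kl ∈ p.coeff.support, kl.1 i + kl.2 i = d i := fun kl hkl =>
      congrFun (hd kl hkl) i
    obtain ⟨kl₀, hkl₀, hkl₀1⟩ : ∃ kl ∈ p.coeff.support, kl.1 i = n0 := by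
      rw [hn0def]
      have := Finset.min'_mem (p.coeff.support.image fun kl => kl.1 i) (hsupp.image _)
      rw [Finset.mem_image] at this
      obtain ⟨kl, h1, h2⟩ := this
      exact ⟨kl, h1, h2⟩
    obtain ⟨kl₁, hkl₁, hkl₁2⟩ : ∃ kl ∈ p.coeff.support, kl.2 i = n1 := by
      rw [hn1def]
      have := Finset.max'_mem (p.coeff.support.image fun kl => kl.2 i) (hsupp.image _)
      rw [Finset.mem_image] at this
      obtain ⟨kl, h1, h2⟩ := this
      exact ⟨kl, h1, h2⟩
    have hn1 : n1 = d i - n0 := by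
      have h1 : n1 ≤ d i - n0 := by
        have := hdi kl₁ hkl₁
        have := hn0_le kl₁ hkl₁
        omega
      have h2 : d i - n0 ≤ n1 := by
        have := hdi kl₀ hkl₀
        have := hle_n1 kl₀ hkl₀
        omega
      omega
    have hl0n1 : l0 ≤ n1 := le_trans (hl0_le kl₁ hkl₁) (le_of_eq hkl₁2)
    set m : ℕ := (n1 - l0).toNat with hmdef
    have hm : (m : ℤ) = n1 - l0 := Int.toNat_of_nonneg (by omega)
    -- q is nonzero
    have hq_ne : q ≠ 0 := by
      have hw : ((Function.update kl₀.1 i 0, Function.update kl₀.2 i 0) : G n)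
          ∈ q.coeff.support := by
        rw [hqdef, mem_coeffAt_support]
        refine ⟨by simp, by simp, ?_⟩
        have e1 : Function.update (Function.update kl₀.1 i 0) i n0 = kl₀.1 := by
          funext j
          by_cases hj : j = i
          · subst hj; simp [hkl₀1]
          · simp [Function.update_of_ne hj]
        have e2 : Function.update (Function.update kl₀.2 i 0) i n1 = kl₀.2 := by
          funext j
          by_cases hj : j = i
          · subst hj
            have h1 := hdi kl₀ hkl₀
            simp only [Function.update_self]
            omega
          · simp [Function.update_of_ne hj]
        rw [e1, e2]
        exact hkl₀
      intro h
      rw [h] at hw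
      simp at hw
    -- q support facts
    have hq_mem : ∀ w ∈ q.coeff.support, w.1 i = 0 ∧ w.2 i = 0 ∧
        ((Function.update w.1 i n0, Function.update w.2 i n1) : G n) ∈ p.coeff.support := by
      intro w hw
      rw [hqdef, mem_coeffAt_support] at hw
      exact hw
    have hq_z : ∀ kl ∈ q.coeff.support, ∀ j : Fin n, k ≤ (j : ℕ) →
        kl.1 j = 0 ∧ kl.2 j = 0 := by
      intro w hw j hj
      obtain ⟨h1, h2, h3⟩ := hq_mem w hw
      by_cases hji : j = i
      · subst hji; exact ⟨h1, h2⟩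
      · have hj' : k + 1 ≤ (j : ℕ) := by
          rcases Nat.lt_or_ge (j : ℕ) (k+1) with h | h
          · exact absurd (Fin.ext (by omega : (j : ℕ) = (i : ℕ))) hji
          · exact h
        have := hz _ h3 j hj'
        constructor
        · rw [show w.1 j = Function.update w.1 i n0 j from
            (Function.update_of_ne hji _ _).symm]
          exact this.1
        · rw [show w.2 j = Function.update w.2 i n1 j from
            (Function.update_of_ne hji _ _).symm]
          exact this.2
    have hq_d : ∀ kl ∈ q.coeff.support, kl.1 + kl.2 = Function.update d i 0 := by
      intro w hw
      obtain ⟨h1, h2, h3⟩ := hq_mem w hw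
      have := hd _ h3
      funext j
      by_cases hji : j = i
      · subst hji
        simp only [Pi.add_apply, h1, h2, Function.update_self, add_zero]
      · have := congrFun this j
        simp only [Pi.add_apply, Function.update_of_ne hji] at this ⊢
        exact this
    have ihq := ih (le_of_lt hkn) q hq_ne hq_z ⟨Function.update d i 0, hq_d⟩
    -- now the goal
    set s : G n := -(regExp n (k+1) p) with hsdef
    have hs1 : ∀ j : Fin n, s.1 j = -((Pi.single i n0 : Fin n → ℤ) j + e.1 j) := by
      intro j
      rw [hsdef, hreg]
      rfl
    have hs2 : ∀ j : Fin n, s.2 j = -((Pi.single i l0 : Fin n → ℤ) j + e.2 j) := by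
      intro j
      rw [hsdef, hreg]
      rfl
    have hs1i : s.1 i = -n0 := by rw [hs1 i, (he i le_rfl).1, Pi.single_eq_same, add_zero]
    have hs2i : s.2 i = -l0 := by rw [hs2 i, (he i le_rfl).2, Pi.single_eq_same, add_zero]
    have hs1j : ∀ j : Fin n, k + 1 ≤ (j : ℕ) → s.1 j = 0 := by
      intro j hj
      have hji : i ≠ j := by intro h; have := congrArg Fin.val h; simp only [hival] at this; omega
      rw [hs1 j, Pi.single_eq_of_ne' hji, (he j (by omega)).1, add_zero, neg_zero]
    have hs2j : ∀ j : Fin n, k + 1 ≤ (j : ℕ) → s.2 j = 0 := by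
      intro j hj
      have hji : i ≠ j := by intro h; have := congrArg Fin.val h; simp only [hival] at this; omega
      rw [hs2 j, Pi.single_eq_of_ne' hji, (he j (by omega)).2, add_zero, neg_zero]
    set p' : Lring n := AddMonoidAlgebra.single s (1 : Rring n) * p with hp'def
    have hmem : ∀ kl : G n, kl ∈ p'.coeff.support ↔ kl - s ∈ p.coeff.support :=
      fun kl => mem_shift_support
    refine ⟨?_, ?_, ⟨m, ?_, ?_⟩⟩
    · intro kl hkl j hj
      have hu := hz _ ((hmem kl).mp hkl) j (by omega)
      have e1 : kl.1 j - s.1 j = 0 := hu.1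
      have e2 : kl.2 j - s.2 j = 0 := hu.2
      rw [hs1j j hj] at e1
      rw [hs2j j hj] at e2
      omega
    · refine ⟨d + (s.1 + s.2), ?_⟩
      intro kl hkl
      have hu := hd _ ((hmem kl).mp hkl)
      funext j
      have := congrFun hu j
      simp only [Pi.add_apply] at this ⊢
      have e1 : (kl - s).1 j = kl.1 j - s.1 j := rfl
      have e2 : (kl - s).2 j = kl.2 j - s.2 j := rfl
      rw [e1, e2] at this
      omega
    · intro kl hkl j hj
      have hji : j = i := Fin.ext (by omega)
      rw [hji]
      have hu := (hmem kl).mp hkl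
      have h1 := hn0_le _ hu
      have h2 := hl0_le _ hu
      have h3 := hdi _ hu
      have e1 : (kl - s).1 i = kl.1 i - s.1 i := rfl
      have e2 : (kl - s).2 i = kl.2 i - s.2 i := rfl
      rw [e1] at h1
      rw [e2] at h2
      rw [e1, e2] at h3
      rw [hs1i] at h1 h3
      rw [hs2i] at h2 h3
      refine ⟨by omega, by omega, by omega⟩
    · intro j hj
      have hji : j = i := Fin.ext (by omega)
      rw [hji]
      have key : coeffAt n i 0 (m : ℤ) p' =
          AddMonoidAlgebra.single (-e) (1 : Rring n) * q := by
        have h1 : (0 : ℤ) = n0 + s.1 i := by rw [hs1i]; ring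
        have h2 : (m : ℤ) = n1 + s.2 i := by rw [hs2i, hm]; ring
        rw [h1, h2, hp'def, coeffAt_shift]
        have hpair : ((Function.update s.1 i 0, Function.update s.2 i 0) : G n) = -e := by
          refine Prod.ext ?_ ?_
          · funext j'
            by_cases hj' : j' = i
            · rw [hj']
              show Function.update s.1 i 0 i = -e.1 i
              rw [Function.update_self, (he i le_rfl).1, neg_zero]
            · show Function.update s.1 i 0 j' = -e.1 j'
              rw [Function.update_of_ne hj', hs1 j',
                Pi.single_eq_of_ne' (fun h => hj' h.symm), zero_add]
          · funext j'
            by_cases hj' : j' = i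
            · rw [hj']
              show Function.update s.2 i 0 i = -e.2 i
              rw [Function.update_self, (he i le_rfl).2, neg_zero]
            · show Function.update s.2 i 0 j' = -e.2 j'
              rw [Function.update_of_ne hj', hs2 j',
                Pi.single_eq_of_ne' (fun h => hj' h.symm), zero_add]
        rw [hpair, ← hqdef]
      rw [key]
      exact ihq

end Panazzolo


/-- For every nonzero homogeneous Laurent polynomial `p ∈ 𝕃ₙ^hom`, the
quotient `p/reg(p)` by its regularization monomial is `n`-regular. -/
theorem statement4 (n : ℕ) (hn : 1 ≤ n) (p : Lring n) (hp : p ≠ 0)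
    (d : Fin n → ℤ) (hd : ∀ kl ∈ p.coeff.support, kl.1 + kl.2 = d) :
    Panazzolo.IsReg n n (Panazzolo.divreg n p) := by
  rw [Panazzolo.divreg]
  exact Panazzolo.main_reg n le_rfl p hp
    (fun kl _ i hi => absurd i.isLt (by omega)) ⟨d, hd⟩
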